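/- arXiv:1911.03539 — 4 statements merged into one kernel-verified Lean document; each statement's English description precedes it below -/
import Mathlib

section
/- If μ_1 = μ_2 and the positive semidefinite matrices Σ_1, Σ_2 commute (Σ_1 Σ_2 = Σ_2 Σ_1), then the Gelbrich distance simplifies to G((μ_1,Σ_1),(μ_2,Σ_2)) = ||√Σ_1 - √Σ_2||_F, the Frobenius norm of the difference of the matrix square roots. -/
open Matrix
noncomputable section
open scoped Classical

/-- Positive semidefinite square root (0 if not PSD). -/
def psdSqrt {d : ℕ} (A : Matrix (Fin d) (Fin d) ℝ) : Matrix (Fin d) (Fin d) ℝ :=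
  if h : A.PosSemidef then
    h.1.eigenvectorUnitary.1 * diagonal ((↑) ∘ (√·) ∘ h.1.eigenvalues) *
      (star h.1.eigenvectorUnitary : Matrix (Fin d) (Fin d) ℝ)
  else 0

/-- Frobenius norm. -/
def frob {d : ℕ} (A : Matrix (Fin d) (Fin d) ℝ) : ℝ := Real.sqrt (Aᵀ * A).trace

/-- Trace inner product. -/
def ip {d : ℕ} (A B : Matrix (Fin d) (Fin d) ℝ) : ℝ := (Aᵀ * B).trace

/-- Largest eigenvalue of a symmetric matrix (0 if not symmetric). -/
def lamMax {d : ℕ} (A : Matrix (Fin d) (Fin d) ℝ) : ℝ :=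
  if h : A.IsHermitian then ⨆ i, h.eigenvalues i else 0

/-- Smallest eigenvalue of a symmetric matrix (0 if not symmetric). -/
def lamMin {d : ℕ} (A : Matrix (Fin d) (Fin d) ℝ) : ℝ :=
  if h : A.IsHermitian then ⨅ i, h.eigenvalues i else 0

/-- Gelbrich distance between two mean–covariance pairs. -/
def gelbrich {d : ℕ} (μ₁ μ₂ : EuclideanSpace ℝ (Fin d))
    (S₁ S₂ : Matrix (Fin d) (Fin d) ℝ) : ℝ :=
  Real.sqrt (‖μ₁ - μ₂‖ ^ 2 + (S₁ + S₂ - 2 • psdSqrt (psdSqrt S₂ * S₁ * psdSqrt S₂)).trace)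

/-- Positive semidefinite square root of a PSD matrix. -/
def Matrix.PosSemidef.sqrt {d : ℕ} {A : Matrix (Fin d) (Fin d) ℝ} (h : A.PosSemidef) :
    Matrix (Fin d) (Fin d) ℝ :=
  h.1.eigenvectorUnitary.1 * diagonal (RCLike.ofReal ∘ Real.sqrt ∘ h.1.eigenvalues) *
    (star h.1.eigenvectorUnitary : Matrix (Fin d) (Fin d) ℝ)

open scoped MatrixOrder in
lemma Matrix.PosSemidef.sqrt_eq_cfc {d : ℕ} {A : Matrix (Fin d) (Fin d) ℝ}
    (h : A.PosSemidef) : h.sqrt = CFC.sqrt A := by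
  rw [CFC.sqrt_eq_real_sqrt A h.nonneg, cfcₙ_eq_cfc, h.1.cfc_eq]
  simp [Matrix.IsHermitian.cfc, Matrix.PosSemidef.sqrt]

open scoped MatrixOrder in
lemma Matrix.PosSemidef.posSemidef_sqrt {d : ℕ} {A : Matrix (Fin d) (Fin d) ℝ}
    (h : A.PosSemidef) : h.sqrt.PosSemidef := by
  rw [h.sqrt_eq_cfc]; exact (CFC.sqrt_nonneg A).posSemidef

open scoped MatrixOrder in
lemma Matrix.PosSemidef.sqrt_mul_self {d : ℕ} {A : Matrix (Fin d) (Fin d) ℝ}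
    (h : A.PosSemidef) : h.sqrt * h.sqrt = A := by
  rw [h.sqrt_eq_cfc]; exact CFC.sqrt_mul_sqrt_self A h.nonneg

open scoped MatrixOrder in
lemma Matrix.PosSemidef.eq_sqrt_of_sq_eq {d : ℕ} {A B : Matrix (Fin d) (Fin d) ℝ}
    (hB : B.PosSemidef) (hA : A.PosSemidef) (hsq : B ^ 2 = A) : B = hA.sqrt := by
  rw [hA.sqrt_eq_cfc, ← hsq, CFC.sqrt_sq B hB.nonneg]

/-- A matrix commuting with a diagonal matrix commutes with any function of the diagonal. -/
lemma aux_commute_diagonal {n : Type*} [Fintype n] [DecidableEq n]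
    {C : Matrix n n ℝ} {v : n → ℝ} (h : C * diagonal v = diagonal v * C) (f : ℝ → ℝ) :
    C * diagonal (f ∘ v) = diagonal (f ∘ v) * C := by
  ext i j
  have hij : C i j * v j = v i * C i j := by
    have := congrFun (congrFun h i) j
    simpa [mul_diagonal, diagonal_mul] using this
  simp only [mul_diagonal, diagonal_mul, Function.comp_apply]
  rcases eq_or_ne (v i) (v j) with hv | hv
  · rw [hv, mul_comm]
  · have hC : C i j = 0 := by
      by_contra hC
      exact hv (mul_left_cancel₀ hC (by linarith [hij])).symm
    simp [hC]

/-- A matrix commuting with a PSD matrix commutes with its square root. -/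
lemma aux_commute_sqrt {d : ℕ} {A B : Matrix (Fin d) (Fin d) ℝ}
    (hA : A.PosSemidef) (h : A * B = B * A) : hA.sqrt * B = B * hA.sqrt := by
  set U : Matrix (Fin d) (Fin d) ℝ := (hA.1.eigenvectorUnitary : Matrix (Fin d) (Fin d) ℝ) with hU
  have hUU : star U * U = 1 := (Matrix.mem_unitaryGroup_iff').mp hA.1.eigenvectorUnitary.2
  have hUU' : U * star U = 1 := (Matrix.mem_unitaryGroup_iff).mp hA.1.eigenvectorUnitary.2
  set v : Fin d → ℝ := hA.1.eigenvalues with hv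
  have hvcoe : (RCLike.ofReal ∘ v : Fin d → ℝ) = v := by ext i; simp
  have hspec : A = U * diagonal v * star U := by
    have := hA.1.spectral_theorem
    rwa [hvcoe] at this
  set C : Matrix (Fin d) (Fin d) ℝ := star U * B * U with hC
  have cancel : ∀ X : Matrix (Fin d) (Fin d) ℝ, star U * (U * X * star U) * U = X := by
    intro X
    calc star U * (U * X * star U) * U = (star U * U) * X * (star U * U) := by
          simp [Matrix.mul_assoc]
      _ = X := by rw [hUU]; simp
  have h3 : B * U = U * C := by
    rw [hC, ← Matrix.mul_assoc, ← Matrix.mul_assoc, hUU', Matrix.one_mul]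
  have h4 : star U * B = C * star U := by
    rw [hC, Matrix.mul_assoc, hUU', Matrix.mul_one]
  have hCD : C * diagonal v = diagonal v * C := by
    have h2 : U * diagonal v * star U * B = B * (U * diagonal v * star U) := by
      rw [← hspec]; exact h
    have h5 : U * (diagonal v * C) * star U = U * (C * diagonal v) * star U := by
      calc U * (diagonal v * C) * star U
          = U * diagonal v * (C * star U) := by simp [Matrix.mul_assoc]
        _ = U * diagonal v * (star U * B) := by rw [← h4]
        _ = U * diagonal v * star U * B := by simp [Matrix.mul_assoc]
        _ = B * (U * diagonal v * star U) := h2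
        _ = (B * U) * (diagonal v * star U) := by simp [Matrix.mul_assoc]
        _ = (U * C) * (diagonal v * star U) := by rw [h3]
        _ = U * (C * diagonal v) * star U := by simp [Matrix.mul_assoc]
    have h6 := congrArg (fun M => star U * M * U) h5
    simpa only [cancel] using h6.symm
  have key := aux_commute_diagonal hCD Real.sqrt
  have hd : (RCLike.ofReal ∘ Real.sqrt ∘ hA.1.eigenvalues : Fin d → ℝ) = Real.sqrt ∘ v := by
    ext i; simp [hv]
  have hsq : hA.sqrt = U * diagonal (Real.sqrt ∘ v) * star U := by
    rw [Matrix.PosSemidef.sqrt, hd]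
  rw [hsq]
  calc U * diagonal (Real.sqrt ∘ v) * star U * B
      = U * diagonal (Real.sqrt ∘ v) * (C * star U) := by
        simp only [hC, Matrix.mul_assoc, hUU']
        simp [Matrix.mul_assoc]
    _ = U * (diagonal (Real.sqrt ∘ v) * C) * star U := by simp [Matrix.mul_assoc]
    _ = U * (C * diagonal (Real.sqrt ∘ v)) * star U := by rw [key]
    _ = (U * C) * diagonal (Real.sqrt ∘ v) * star U := by simp [Matrix.mul_assoc]
    _ = B * (U * diagonal (Real.sqrt ∘ v) * star U) := by
        have : U * C = B * U := by
          simp only [hC, ← Matrix.mul_assoc, hUU']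
          simp
        rw [this]
        simp [Matrix.mul_assoc]

/-- Gelbrich distance with equal means and commuting covariance matrices. -/
theorem gelbrich_commuting {d : ℕ} (μ₁ μ₂ : EuclideanSpace ℝ (Fin d))
    (S₁ S₂ : Matrix (Fin d) (Fin d) ℝ)
    (h₁ : S₁.PosSemidef) (h₂ : S₂.PosSemidef)
    (hμ : μ₁ = μ₂) (hcomm : S₁ * S₂ = S₂ * S₁) :
    gelbrich μ₁ μ₂ S₁ S₂ = frob (psdSqrt S₁ - psdSqrt S₂) := by
  set T₁ := h₁.sqrt with hT₁
  set T₂ := h₂.sqrt with hT₂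
  have hT₁S₂ : T₁ * S₂ = S₂ * T₁ := aux_commute_sqrt h₁ hcomm
  have hTT : T₂ * T₁ = T₁ * T₂ := aux_commute_sqrt h₂ hT₁S₂.symm
  -- R is the fourth root of S₂
  have hT₂psd : T₂.PosSemidef := h₂.posSemidef_sqrt
  set R := hT₂psd.sqrt with hRdef
  have hRR : R * R = T₂ := hT₂psd.sqrt_mul_self
  have hRT₁ : R * T₁ = T₁ * R := aux_commute_sqrt hT₂psd hTT
  have hRH : Rᴴ = R := hT₂psd.posSemidef_sqrt.1
  have hT₁H : T₁ᴴ = T₁ := h₁.posSemidef_sqrt.1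
  have hT₂H : T₂ᴴ = T₂ := hT₂psd.1
  -- P = T₁ T₂ is PSD
  have hPpsd : (T₁ * T₂).PosSemidef := by
    have hP : T₁ * T₂ = Rᴴ * T₁ * R := by
      rw [hRH, ← hRR, ← Matrix.mul_assoc, hRT₁]
    rw [hP]
    exact h₁.posSemidef_sqrt.conjTranspose_mul_mul_same R
  have hMpsd : (T₂ * S₁ * T₂).PosSemidef := by
    have hM : T₂ * S₁ * T₂ = (T₁ * T₂)ᴴ * (T₁ * T₂) := by
      rw [conjTranspose_mul, hT₁H, hT₂H, ← h₁.sqrt_mul_self, ← hT₁]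
      simp [Matrix.mul_assoc]
    rw [hM]
    exact posSemidef_conjTranspose_mul_self _
  have hPsq : (T₁ * T₂) ^ 2 = T₂ * S₁ * T₂ := by
    rw [pow_two, ← h₁.sqrt_mul_self, ← hT₁]
    calc T₁ * T₂ * (T₁ * T₂) = T₁ * (T₂ * T₁) * T₂ := by simp [Matrix.mul_assoc]
      _ = T₁ * (T₁ * T₂) * T₂ := by rw [hTT]
      _ = T₁ * T₁ * (T₂ * T₂) := by simp [Matrix.mul_assoc]
      _ = T₂ * (T₁ * T₁) * T₂ := by
          have h1 : T₁ * T₁ * T₂ = T₂ * (T₁ * T₁) := by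
            rw [Matrix.mul_assoc, ← hTT, ← Matrix.mul_assoc, ← hTT, Matrix.mul_assoc]
          rw [← Matrix.mul_assoc, h1]
  have hsqrtM : hMpsd.sqrt = T₁ * T₂ := (hPpsd.eq_sqrt_of_sq_eq hMpsd hPsq).symm
  -- unfold psdSqrt
  have e₁ : psdSqrt S₁ = T₁ := by rw [psdSqrt, dif_pos h₁]; rfl
  have e₂ : psdSqrt S₂ = T₂ := by rw [psdSqrt, dif_pos h₂]; rfl
  have e₃ : psdSqrt (psdSqrt S₂ * S₁ * psdSqrt S₂) = T₁ * T₂ := by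
    rw [e₂, psdSqrt, dif_pos hMpsd]; exact hsqrtM
  rw [gelbrich, frob, e₃, e₁, e₂, hμ, sub_self, norm_zero]
  congr 1
  rw [zero_pow (by norm_num), zero_add]
  have expand : (T₁ - T₂)ᵀ * (T₁ - T₂) = T₁ * T₁ - T₁ * T₂ - T₂ * T₁ + T₂ * T₂ := by
    have ht1 : T₁ᵀ = T₁ := hT₁H
    have ht2 : T₂ᵀ = T₂ := hT₂H
    rw [transpose_sub, ht1, ht2, Matrix.sub_mul, Matrix.mul_sub, Matrix.mul_sub]
    abel
  rw [expand]
  have h1 : (T₁ * T₁).trace = S₁.trace := by rw [h₁.sqrt_mul_self]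
  have h2 : (T₂ * T₂).trace = S₂.trace := by rw [h₂.sqrt_mul_self]
  have h3 : (T₂ * T₁).trace = (T₁ * T₂).trace := trace_mul_comm T₂ T₁
  simp only [trace_sub, trace_add, trace_smul, h1, h2, h3]
  ring
end
end

section
/- The matrix square root is Hölder continuous with exponent 1/2 on the cone of positive semidefinite matrices: for all A_1, A_2 ∈ S_+^d, ||√A_1 - √A_2||_F ≤ 2√d · ||A_1 - A_2||_F^{1/2}. -/
open Matrix
noncomputable section
open scoped Classical

namespace SqrtHolderAux

variable {d : ℕ}

lemma trace_transpose_mul_eq (A B : Matrix (Fin d) (Fin d) ℝ) :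
    (Aᵀ * B).trace = ∑ i, ∑ j, A i j * B i j := by
  simp only [Matrix.trace, Matrix.diag, Matrix.mul_apply, Matrix.transpose_apply]
  exact Finset.sum_comm

lemma trace_tmul_eq (A : Matrix (Fin d) (Fin d) ℝ) :
    (Aᵀ * A).trace = ∑ i, ∑ j, A i j ^ 2 := by
  rw [trace_transpose_mul_eq]; simp [sq]

lemma frob_eq (A : Matrix (Fin d) (Fin d) ℝ) :
    frob A = Real.sqrt (∑ i, ∑ j, A i j ^ 2) := by
  rw [frob, trace_tmul_eq]

lemma frob_nonneg (A : Matrix (Fin d) (Fin d) ℝ) : 0 ≤ frob A := Real.sqrt_nonneg _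

lemma frob_sq (A : Matrix (Fin d) (Fin d) ℝ) : frob A ^ 2 = (Aᵀ * A).trace := by
  rw [frob, Real.sq_sqrt]
  rw [trace_tmul_eq]; positivity

lemma trace_cs (A B : Matrix (Fin d) (Fin d) ℝ) :
    (Aᵀ * B).trace ≤ frob A * frob B := by
  rw [trace_transpose_mul_eq, frob_eq, frob_eq]
  have h := Real.sum_mul_le_sqrt_mul_sqrt (Finset.univ ×ˢ Finset.univ)
    (fun p => A p.1 p.2) (fun p => B p.1 p.2)
  simpa [← Finset.sum_product', Finset.sum_product] using h

lemma trace_diag_mul (f : Fin d → ℝ) (M : Matrix (Fin d) (Fin d) ℝ) :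
    (diagonal f * M).trace = ∑ i, f i * M i i := by
  simp [Matrix.trace, Matrix.diag, Matrix.diagonal_mul]

lemma conj_quad (U S : Matrix (Fin d) (Fin d) ℝ) (i : Fin d) :
    (star U * (S * U)) i i = star (fun j => U j i) ⬝ᵥ S *ᵥ (fun j => U j i) := by
  simp only [Matrix.mul_apply, Matrix.star_apply, star_trivial, dotProduct, Matrix.mulVec,
    Pi.star_apply, dotProduct]

lemma trace_sq_mul_spectral (D S : Matrix (Fin d) (Fin d) ℝ) (hD : D.IsHermitian) :
    (D * D * S).trace = ∑ i, hD.eigenvalues i ^ 2 *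
      (star ⇑(hD.eigenvectorBasis i) ⬝ᵥ S *ᵥ ⇑(hD.eigenvectorBasis i)) := by
  set U : Matrix (Fin d) (Fin d) ℝ := (hD.eigenvectorUnitary : Matrix (Fin d) (Fin d) ℝ) with hUdef
  set Λ : Matrix (Fin d) (Fin d) ℝ := diagonal (RCLike.ofReal ∘ hD.eigenvalues) with hΛdef
  have hU : star U * U = 1 := Unitary.coe_star_mul_self hD.eigenvectorUnitary
  have hspec : D = U * Λ * star U := by
    have h := hD.spectral_theorem; rw [Unitary.conjStarAlgAut_apply] at h; exact h
  have h1 : D * D * S = U * (Λ * Λ) * (star U * S) := by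
    rw [hspec]
    calc U * Λ * star U * (U * Λ * star U) * S
        = U * (Λ * ((star U * U) * Λ)) * (star U * S) := by
          simp only [Matrix.mul_assoc]
      _ = U * (Λ * Λ) * (star U * S) := by rw [hU, Matrix.one_mul]
  have hΛΛ : Λ * Λ = diagonal (fun i => hD.eigenvalues i ^ 2) := by
    rw [hΛdef, diagonal_mul_diagonal]
    funext i j; simp [sq]
  have h2 : (D * D * S).trace
      = (diagonal (fun i => hD.eigenvalues i ^ 2) * (star U * (S * U))).trace := by
    rw [h1, hΛΛ, Matrix.mul_assoc, Matrix.trace_mul_comm]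
    simp only [Matrix.mul_assoc]
  rw [h2, trace_diag_mul]
  refine Finset.sum_congr rfl fun i _ => ?_
  rw [conj_quad]
  simp only [hUdef]
  exact congrArg _ rfl

lemma quad_eig (D : Matrix (Fin d) (Fin d) ℝ) (hD : D.IsHermitian) (i : Fin d) :
    star ⇑(hD.eigenvectorBasis i) ⬝ᵥ D *ᵥ ⇑(hD.eigenvectorBasis i) = hD.eigenvalues i := by
  have := hD.eigenvalues_eq i
  simpa using this.symm

lemma quad_ge_abs (D S : Matrix (Fin d) (Fin d) ℝ) (hD : D.IsHermitian)
    (hps : (S - D).PosSemidef) (hms : (S + D).PosSemidef) (i : Fin d) :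
    |hD.eigenvalues i| ≤ star ⇑(hD.eigenvectorBasis i) ⬝ᵥ S *ᵥ ⇑(hD.eigenvectorBasis i) := by
  set v := ⇑(hD.eigenvectorBasis i)
  have h1 : 0 ≤ star v ⬝ᵥ (S - D) *ᵥ v := hps.dotProduct_mulVec_nonneg v
  have h2 : 0 ≤ star v ⬝ᵥ (S + D) *ᵥ v := hms.dotProduct_mulVec_nonneg v
  rw [Matrix.sub_mulVec, dotProduct_sub] at h1
  rw [Matrix.add_mulVec, dotProduct_add] at h2
  rw [quad_eig D hD i] at h1 h2
  rw [abs_le]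
  constructor <;> linarith

lemma quad_one (D : Matrix (Fin d) (Fin d) ℝ) (hD : D.IsHermitian) (i : Fin d) :
    star ⇑(hD.eigenvectorBasis i) ⬝ᵥ (1 : Matrix (Fin d) (Fin d) ℝ) *ᵥ ⇑(hD.eigenvectorBasis i)
      = 1 := by
  set v := hD.eigenvectorBasis i with hv
  have hnorm : ‖v‖ = 1 := hD.eigenvectorBasis.orthonormal.1 i
  have hinner : (inner ℝ v v : ℝ) = 1 := by
    rw [real_inner_self_eq_norm_sq, hnorm]; norm_num
  rw [Matrix.one_mulVec]
  rw [PiLp.inner_apply] at hinner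
  simpa [dotProduct, sq] using hinner

lemma psdSqrt_psd {A : Matrix (Fin d) (Fin d) ℝ} (h : A.PosSemidef) :
    (psdSqrt A).PosSemidef := by
  rw [psdSqrt, dif_pos h, star_eq_conjTranspose]
  apply PosSemidef.mul_mul_conjTranspose_same
  apply PosSemidef.diagonal
  intro i
  simp [Real.sqrt_nonneg]

lemma psdSqrt_mul_self {A : Matrix (Fin d) (Fin d) ℝ} (h : A.PosSemidef) :
    psdSqrt A * psdSqrt A = A := by
  rw [psdSqrt, dif_pos h]
  have hU := Unitary.coe_star_mul_self h.1.eigenvectorUnitary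
  have hs := h.1.spectral_theorem
  rw [Unitary.conjStarAlgAut_apply] at hs
  conv_rhs => rw [hs]
  simp only [Matrix.mul_assoc]
  rw [← Matrix.mul_assoc (star (h.1.eigenvectorUnitary : Matrix (Fin d) (Fin d) ℝ)), hU,
    Matrix.one_mul, ← Matrix.mul_assoc (diagonal _) (diagonal _), diagonal_mul_diagonal]
  congr 3
  funext i
  simp [Real.mul_self_sqrt (h.eigenvalues_nonneg i)]

end SqrtHolderAux

open SqrtHolderAux in
/-- Hölder continuity of the matrix square root with exponent 1/2. -/
theorem sqrt_holder {d : ℕ} (A₁ A₂ : Matrix (Fin d) (Fin d) ℝ)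
    (h₁ : A₁.PosSemidef) (h₂ : A₂.PosSemidef) :
    frob (psdSqrt A₁ - psdSqrt A₂) ≤ 2 * Real.sqrt d * Real.sqrt (frob (A₁ - A₂)) := by
  have hB₁ := psdSqrt_psd h₁
  have hB₂ := psdSqrt_psd h₂
  set B₁ := psdSqrt A₁ with hB1def
  set B₂ := psdSqrt A₂ with hB2def
  set D := B₁ - B₂ with hDdef
  set S := B₁ + B₂ with hSdef
  have hD : D.IsHermitian := hB₁.1.sub hB₂.1
  have hDT : Dᵀ = D := by
    rw [← Matrix.conjTranspose_eq_transpose_of_trivial, hD.eq]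
  have hps : (S - D).PosSemidef := by
    have : S - D = B₂ + B₂ := by rw [hSdef, hDdef]; abel
    rw [this]; exact hB₂.add hB₂
  have hms : (S + D).PosSemidef := by
    have : S + D = B₁ + B₁ := by rw [hSdef, hDdef]; abel
    rw [this]; exact hB₁.add hB₁
  set lam := hD.eigenvalues with hlam
  set s : Fin d → ℝ :=
    fun i => star ⇑(hD.eigenvectorBasis i) ⬝ᵥ S *ᵥ ⇑(hD.eigenvectorBasis i) with hsdef
  set M := frob (A₁ - A₂) with hMdef
  set X := ∑ i, lam i ^ 2 with hXdef
  have hMnn : 0 ≤ M := frob_nonneg _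
  have hXnn : 0 ≤ X := Finset.sum_nonneg fun i _ => sq_nonneg _
  -- trace identity : tr(D²S) = tr(Dᵀ(A₁-A₂))
  have hkey : (D * D * S).trace = (Dᵀ * (A₁ - A₂)).trace := by
    have hA1 : B₁ * B₁ = A₁ := psdSqrt_mul_self h₁
    have hA2 : B₂ * B₂ = A₂ := psdSqrt_mul_self h₂
    have e : D * D * S + D * (S * D) = D * (A₁ - A₂) + D * (A₁ - A₂) := by
      rw [← hA1, ← hA2, hDdef, hSdef]
      noncomm_ring
    have e2 : (D * (S * D)).trace = (D * D * S).trace := by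
      rw [← Matrix.mul_assoc, Matrix.trace_mul_cycle, Matrix.mul_assoc]
    have e3 := congrArg Matrix.trace e
    rw [Matrix.trace_add, Matrix.trace_add, e2] at e3
    rw [hDT]
    linarith
  -- frob D squared
  have hfrobD : frob D = Real.sqrt X := by
    rw [frob]
    congr 1
    rw [hDT]
    have := trace_sq_mul_spectral D 1 hD
    rw [Matrix.mul_one] at this
    rw [this, hXdef]
    exact Finset.sum_congr rfl fun i _ => by rw [quad_one D hD i, mul_one]
  -- spectral bound
  have hspec : (D * D * S).trace = ∑ i, lam i ^ 2 * s i := trace_sq_mul_spectral D S hD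
  have hC : ∑ i, lam i ^ 2 * |lam i| ≤ ∑ i, lam i ^ 2 * s i := by
    refine Finset.sum_le_sum fun i _ => ?_
    exact mul_le_mul_of_nonneg_left (quad_ge_abs D S hD hps hms i) (sq_nonneg _)
  set C := ∑ i, lam i ^ 2 * |lam i| with hCdef
  have hCnn : 0 ≤ C := Finset.sum_nonneg fun i _ => mul_nonneg (sq_nonneg _) (abs_nonneg _)
  set L := ∑ i, |lam i| with hLdef
  have hLnn : 0 ≤ L := Finset.sum_nonneg fun i _ => abs_nonneg _
  -- Cauchy–Schwarz bounds
  have hXCL : X ^ 2 ≤ C * L := by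
    have cs := Finset.sum_mul_sq_le_sq_mul_sq Finset.univ
      (fun i => |lam i| * Real.sqrt |lam i|) (fun i => Real.sqrt |lam i|)
    have e1 : ∀ i : Fin d, |lam i| * Real.sqrt |lam i| * Real.sqrt |lam i| = lam i ^ 2 := by
      intro i
      rw [mul_assoc, Real.mul_self_sqrt (abs_nonneg _), ← abs_mul, ← sq, abs_sq]
    have e2 : ∀ i : Fin d, (|lam i| * Real.sqrt |lam i|) ^ 2 = lam i ^ 2 * |lam i| := by
      intro i
      rw [mul_pow, Real.sq_sqrt (abs_nonneg _), sq_abs]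
    have e3 : ∀ i : Fin d, (Real.sqrt |lam i|) ^ 2 = |lam i| :=
      fun i => Real.sq_sqrt (abs_nonneg _)
    calc X ^ 2 = (∑ i, |lam i| * Real.sqrt |lam i| * Real.sqrt |lam i|) ^ 2 := by
          rw [hXdef]; congr 1; exact (Finset.sum_congr rfl fun i _ => e1 i).symm
      _ ≤ (∑ i, (|lam i| * Real.sqrt |lam i|) ^ 2) * ∑ i, (Real.sqrt |lam i|) ^ 2 := cs
      _ = C * L := by
          rw [hCdef, hLdef]
          congr 1
          · exact Finset.sum_congr rfl fun i _ => e2 i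
          · exact Finset.sum_congr rfl fun i _ => e3 i
  have hLX : L ^ 2 ≤ d * X := by
    have cs := Finset.sum_mul_sq_le_sq_mul_sq Finset.univ (fun i => |lam i|) (fun _ => (1 : ℝ))
    simp only [mul_one, one_pow, Finset.sum_const, Finset.card_univ, Fintype.card_fin,
      nsmul_eq_mul, sq_abs] at cs
    calc L ^ 2 ≤ (∑ i, lam i ^ 2) * (d : ℝ) := cs
      _ = d * X := by rw [hXdef]; ring
  -- combine: C ≤ frob D * M
  have hCM : C ≤ Real.sqrt X * M := by
    calc C ≤ ∑ i, lam i ^ 2 * s i := hC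
      _ = (Dᵀ * (A₁ - A₂)).trace := by rw [← hspec, hkey]
      _ ≤ frob D * frob (A₁ - A₂) := trace_cs D (A₁ - A₂)
      _ = Real.sqrt X * M := by rw [hfrobD, hMdef]
  -- conclude X ≤ √d * M
  have hXle : X ≤ Real.sqrt d * M := by
    rcases eq_or_lt_of_le hXnn with h0 | hXpos
    · rw [← h0]; positivity
    · have hsX : Real.sqrt X ^ 2 = X := Real.sq_sqrt hXnn
      have hsXnn : 0 ≤ Real.sqrt X := Real.sqrt_nonneg _
      -- X^4 ≤ C^2 L^2 ≤ (√X M)^2 * (d X)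
      have h4 : X ^ 4 ≤ (Real.sqrt X * M) ^ 2 * (d * X) := by
        have c1 : (X ^ 2) ^ 2 ≤ (C * L) ^ 2 := by
          apply pow_le_pow_left₀ (sq_nonneg _) hXCL
        have c2 : (C * L) ^ 2 = C ^ 2 * L ^ 2 := by ring
        have c3 : C ^ 2 ≤ (Real.sqrt X * M) ^ 2 := pow_le_pow_left₀ hCnn hCM 2
        have c5 : C ^ 2 * L ^ 2 ≤ (Real.sqrt X * M) ^ 2 * (d * X) := by
          apply mul_le_mul c3 hLX (sq_nonneg _) (by positivity)
        calc X ^ 4 = (X ^ 2) ^ 2 := by ring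
          _ ≤ (C * L) ^ 2 := c1
          _ = C ^ 2 * L ^ 2 := c2
          _ ≤ _ := c5
      have h5 : X ^ 4 ≤ X ^ 2 * ((d : ℝ) * M ^ 2) := by
        calc X ^ 4 ≤ (Real.sqrt X * M) ^ 2 * (d * X) := h4
          _ = (Real.sqrt X ^ 2) * M ^ 2 * d * X := by ring
          _ = X ^ 2 * ((d : ℝ) * M ^ 2) := by rw [hsX]; ring
      have h6 : X ^ 2 ≤ (d : ℝ) * M ^ 2 := by
        have hX2pos : 0 < X ^ 2 := by positivity
        nlinarith [h5, hX2pos]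
      -- X ≤ √(d M²) = √d M
      have h7 : X ≤ Real.sqrt ((d : ℝ) * M ^ 2) := by
        rw [← Real.sqrt_sq hXnn]
        exact Real.sqrt_le_sqrt h6
      calc X ≤ Real.sqrt ((d : ℝ) * M ^ 2) := h7
        _ = Real.sqrt d * Real.sqrt (M ^ 2) := Real.sqrt_mul (by positivity) _
        _ = Real.sqrt d * M := by rw [Real.sqrt_sq hMnn]
  -- final step
  have hgoal : frob D ≤ 2 * Real.sqrt d * Real.sqrt M := by
    rw [hfrobD]
    rcases Nat.eq_zero_or_pos d with hd0 | hdpos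
    · subst hd0
      have hx0 : X = 0 := by rw [hXdef]; simp
      simp [hx0]
    · have hd1 : (1 : ℝ) ≤ Real.sqrt d := by
        rw [show (1:ℝ) = Real.sqrt 1 by simp]
        exact Real.sqrt_le_sqrt (by exact_mod_cast hdpos)
      have hroot : Real.sqrt (Real.sqrt d) ≤ Real.sqrt d := by
        have a2 : Real.sqrt (Real.sqrt (d:ℝ)) ^ 2 = Real.sqrt (d:ℝ) :=
          Real.sq_sqrt (Real.sqrt_nonneg _)
        nlinarith [sq_nonneg (Real.sqrt (Real.sqrt (d:ℝ)) - 1)]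
      calc Real.sqrt X ≤ Real.sqrt (Real.sqrt d * M) := Real.sqrt_le_sqrt hXle
        _ = Real.sqrt (Real.sqrt d) * Real.sqrt M := Real.sqrt_mul (Real.sqrt_nonneg _) _
        _ ≤ Real.sqrt d * Real.sqrt M :=
            mul_le_mul_of_nonneg_right hroot (Real.sqrt_nonneg _)
        _ ≤ 2 * Real.sqrt d * Real.sqrt M := by
            have hnn : 0 ≤ Real.sqrt (d:ℝ) * Real.sqrt M :=
              mul_nonneg (Real.sqrt_nonneg _) (Real.sqrt_nonneg _)
            linarith
  exact hgoal
end
end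

section
/- Let D ∈ S^d be symmetric, Σ̂ ∈ S_+^d, γ ≥ 0, and suppose γ < λ_max(D). Then the supremum over Σ ⪰ 0 of ⟨D,Σ⟩ - γ Tr[Σ - 2(Σ̂^{1/2} Σ Σ̂^{1/2})^{1/2}] is +∞, provided Σ̂ is such that v^T Σ̂ v > 0 for some normalized eigenvector v of D corresponding to λ_max(D) (in particular if Σ̂ ≻ 0). -/
open Matrix
noncomputable section
open scoped Classical

lemma psd_trace_nonneg {d : ℕ} {A : Matrix (Fin d) (Fin d) ℝ} (hA : A.PosSemidef) :
    0 ≤ A.trace := by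
  exact hA.trace_nonneg

lemma psdSqrt_trace_nonneg {d : ℕ} (A : Matrix (Fin d) (Fin d) ℝ) :
    0 ≤ (psdSqrt A).trace := by
  unfold psdSqrt
  split
  · next h =>
    rw [Matrix.trace_mul_comm, ← Matrix.mul_assoc, Unitary.coe_star_mul_self, Matrix.one_mul,
      Matrix.trace_diagonal]
    exact Finset.sum_nonneg fun i _ => Real.sqrt_nonneg _
  · simp

/-- If `γ < λ_max(D)` the penalized linear SDP is unbounded above. -/
theorem penalized_sdp_unbounded {d : ℕ} (D Shat : Matrix (Fin d) (Fin d) ℝ)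
    (hD : D.IsHermitian) (hShat : Shat.PosSemidef) (γ : ℝ) (hγ0 : 0 ≤ γ)
    (hγ : γ < lamMax D)
    (hv : ∃ v : Fin d → ℝ, D.mulVec v = lamMax D • v ∧ v ⬝ᵥ v = 1 ∧
        0 < v ⬝ᵥ Shat.mulVec v) :
    ¬ BddAbove
      {x : ℝ | ∃ S : Matrix (Fin d) (Fin d) ℝ, S.PosSemidef ∧
        x = ip D S - γ * (S - 2 • psdSqrt (psdSqrt Shat * S * psdSqrt Shat)).trace} := by
  obtain ⟨v, hvD, hvn, -⟩ := hv
  rintro ⟨b, hb⟩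
  set lm := lamMax D with hl
  have hpos : 0 < lm - γ := by linarith
  set t : ℝ := max 0 ((b + 1) / (lm - γ)) with ht
  have ht0 : 0 ≤ t := le_max_left _ _
  have htb : b + 1 ≤ t * (lm - γ) := by
    have : (b + 1) / (lm - γ) ≤ t := le_max_right _ _
    calc b + 1 = (b + 1) / (lm - γ) * (lm - γ) := by field_simp
    _ ≤ t * (lm - γ) := by nlinarith
  set S : Matrix (Fin d) (Fin d) ℝ := t • Matrix.vecMulVec v v with hS
  have hSpsd : S.PosSemidef := by
    rw [Matrix.posSemidef_iff_dotProduct_mulVec]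
    constructor
    · ext i j
      simp [hS, Matrix.conjTranspose_apply, Matrix.vecMulVec_apply, mul_comm]
    · intro x
      have : x ⬝ᵥ S.mulVec x = t * (v ⬝ᵥ x) ^ 2 := by
        simp only [hS, Matrix.smul_mulVec, dotProduct_smul, smul_eq_mul]
        congr 1
        simp only [Matrix.mulVec, dotProduct, Matrix.vecMulVec_apply]
        rw [sq]
        simp only [Finset.mul_sum, Finset.sum_mul]
        rw [Finset.sum_comm]
        apply Finset.sum_congr rfl; intro i _
        apply Finset.sum_congr rfl; intro j _
        ring
      have hx : star x = x := by funext i; simp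
      rw [hx, this]
      positivity
  have hip : ip D S = t * lm := by
    have hDt : Dᵀ = D := by
      rw [← Matrix.conjTranspose_eq_transpose_of_trivial]; exact hD.eq
    unfold ip
    rw [hDt]
    have : (D * S).trace = t * (v ⬝ᵥ D.mulVec v) := by
      simp only [hS, Matrix.mul_smul, Matrix.trace_smul, smul_eq_mul]
      congr 1
      simp only [Matrix.trace, Matrix.diag_apply, Matrix.mul_apply, Matrix.vecMulVec_apply,
        dotProduct, Matrix.mulVec]
      rw [Finset.sum_comm]
      apply Finset.sum_congr rfl; intro i _
      rw [Finset.mul_sum]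
      apply Finset.sum_congr rfl; intro j _
      have h2 : D j i = D i j := congrFun (congrFun hDt i) j
      rw [h2]; ring
    rw [this, hvD]
    simp [dotProduct_smul, hvn, mul_comm]
  have hSt : S.trace = t := by
    simp only [hS, Matrix.trace_smul, smul_eq_mul]
    have : (Matrix.vecMulVec v v).trace = v ⬝ᵥ v := by
      simp [Matrix.trace, Matrix.vecMulVec_apply, dotProduct]
    rw [this, hvn, mul_one]
  have hmem : t * lm - γ * (t - 2 * (psdSqrt (psdSqrt Shat * S * psdSqrt Shat)).trace)
      ∈ {x : ℝ | ∃ S : Matrix (Fin d) (Fin d) ℝ, S.PosSemidef ∧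
        x = ip D S - γ * (S - 2 • psdSqrt (psdSqrt Shat * S * psdSqrt Shat)).trace} := by
    refine ⟨S, hSpsd, ?_⟩
    rw [hip]
    congr 1
    rw [Matrix.trace_sub, hSt, Matrix.trace_smul]
    simp [nsmul_eq_mul]
  have hge := hb hmem
  have hq : 0 ≤ (psdSqrt (psdSqrt Shat * S * psdSqrt Shat)).trace :=
    psdSqrt_trace_nonneg _
  nlinarith
end
end

section
/- Let f be convex and β-smooth on a convex compact set S (i.e., ||∇f(s)-∇f(s̄)|| ≤ β||s-s̄|| for all s,s̄ ∈ S). Suppose the iterate s_t ∈ S, direction d_t = F(s_t) - s_t with F(s_t) ∈ S, surrogate gap g_t = -d_t^T ∇f(s_t) satisfies g_t ≥ δ(f(s_t) - f*) and g_t ≥ β ||d_t||^2. Then the full step s_{t+1} = s_t + d_t satisfies f(s_{t+1}) - f* ≤ (1 - δ/2)(f(s_t) - f*), where f* = min_{s∈S} f(s). -/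
/-!
Comparing `f` along the segment from `x` to `y` with a quadratic gives the descent lemma
`f y ≤ f x + ⟪∇f x, y - x⟫ + β/2 ‖y - x‖²`. For the full step `y = s_t + d_t` it reads
`f(s_t + d_t) ≤ f(s_t) - g_t + β‖d_t‖²/2 ≤ f(s_t) - g_t/2`, and `g_t ≥ δ (f(s_t) - f*)` finishes.
-/

open scoped RealInnerProductSpace
open Set

theorem image_one_le_of_hasDerivAt_le_affine {φ φ' : ℝ → ℝ} {a c : ℝ}
    (hφ : ∀ t ∈ Icc (0 : ℝ) 1, HasDerivAt φ (φ' t) t)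
    (hbound : ∀ t ∈ Icc (0 : ℝ) 1, φ' t ≤ a + c * t) :
    φ 1 ≤ φ 0 + a + c / 2 := by
  have hB : ∀ t : ℝ, HasDerivAt (fun t => φ 0 + a * t + c / 2 * t ^ 2) (a + c * t) t := by
    intro t
    refine ((((hasDerivAt_id t).const_mul a).const_add (φ 0)).add
      ((hasDerivAt_pow 2 t).const_mul (c / 2))).congr_deriv ?_
    norm_num
    ring
  have key := image_le_of_deriv_right_le_deriv_boundary (a := 0) (b := 1)
    (fun t ht => (hφ t ht).continuousAt.continuousWithinAt)
    (fun t ht => (hφ t (Ico_subset_Icc_self ht)).hasDerivWithinAt)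
    (by simp) (fun t _ => (hB t).continuousAt.continuousWithinAt)
    (fun t _ => (hB t).hasDerivWithinAt)
    (fun t ht => hbound t (Ico_subset_Icc_self ht)) (right_mem_Icc.2 zero_le_one)
  linarith

section Descent

variable {E : Type*} [NormedAddCommGroup E] [InnerProductSpace ℝ E]

theorem HasGradientAt.hasDerivAt_add_smul [CompleteSpace E] {f : E → ℝ} {g x v : E} {t : ℝ}
    (hf : HasGradientAt f g (x + t • v)) :
    HasDerivAt (fun s : ℝ => f (x + s • v)) ⟪g, v⟫ t := by
  have hline : HasDerivAt (fun s : ℝ => x + s • v) v t := by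
    simpa using ((hasDerivAt_id t).smul_const v).const_add x
  exact hf.hasFDerivAt.comp_hasDerivAt t hline

theorem inner_le_inner_add_of_norm_sub_le {g : E → E} {β : ℝ} {x v : E} {t : ℝ} (ht : 0 ≤ t)
    (hlip : ‖g (x + t • v) - g x‖ ≤ β * ‖x + t • v - x‖) :
    ⟪g (x + t • v), v⟫ ≤ ⟪g x, v⟫ + β * ‖v‖ ^ 2 * t := by
  have hdist : ‖x + t • v - x‖ = t * ‖v‖ := by
    rw [add_sub_cancel_left, norm_smul, Real.norm_of_nonneg ht]
  have : ⟪g (x + t • v) - g x, v⟫ ≤ β * ‖v‖ ^ 2 * t :=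
    calc ⟪g (x + t • v) - g x, v⟫ ≤ ‖g (x + t • v) - g x‖ * ‖v‖ := real_inner_le_norm _ _
      _ ≤ β * (t * ‖v‖) * ‖v‖ := by
        rw [← hdist]; exact mul_le_mul_of_nonneg_right hlip (norm_nonneg _)
      _ = β * ‖v‖ ^ 2 * t := by ring
  rw [inner_sub_left] at this
  linarith

theorem Convex.descent_lemma [CompleteSpace E] {S : Set E} (hS : Convex ℝ S) {f : E → ℝ}
    {g : E → E} (hg : ∀ x ∈ S, HasGradientAt f (g x) x) {β : ℝ}
    (hsmooth : ∀ x ∈ S, ∀ y ∈ S, ‖g x - g y‖ ≤ β * ‖x - y‖) {x y : E} (hx : x ∈ S) (hy : y ∈ S) :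
    f y ≤ f x + ⟪g x, y - x⟫ + β / 2 * ‖y - x‖ ^ 2 := by
  have hmem : ∀ t ∈ Icc (0 : ℝ) 1, x + t • (y - x) ∈ S := fun _ ht => hS.add_smul_sub_mem hx hy ht
  have h := image_one_le_of_hasDerivAt_le_affine (φ := fun t => f (x + t • (y - x)))
    (fun t ht => (hg _ (hmem t ht)).hasDerivAt_add_smul)
    (fun t ht => inner_le_inner_add_of_norm_sub_le ht.1 (hsmooth _ (hmem t ht) x hx))
  simp only [zero_smul, add_zero, one_smul, add_sub_cancel] at h
  linarith

end Descent

theorem frank_wolfe_full_step_decrease_general {d : ℕ}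
    (S : Set (EuclideanSpace ℝ (Fin d))) (hSconv : Convex ℝ S)
    (f : EuclideanSpace ℝ (Fin d) → ℝ)
    (g : EuclideanSpace ℝ (Fin d) → EuclideanSpace ℝ (Fin d))
    (hg : ∀ x ∈ S, HasGradientAt f (g x) x)
    (β : ℝ)
    (hsmooth : ∀ x ∈ S, ∀ y ∈ S, ‖g x - g y‖ ≤ β * ‖x - y‖)
    (fstar : ℝ)
    (δ : ℝ)
    (st Fst : EuclideanSpace ℝ (Fin d)) (hst : st ∈ S) (hFst : Fst ∈ S)
    (hgap : ⟪st - Fst, g st⟫ ≥ δ * (f st - fstar))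
    (hbig : ⟪st - Fst, g st⟫ ≥ β * ‖Fst - st‖ ^ 2) :
    f (st + (Fst - st)) - fstar ≤ (1 - δ / 2) * (f st - fstar) := by
  have hdescent := hSconv.descent_lemma hg hsmooth hst hFst
  have hinner : ⟪g st, Fst - st⟫ = -⟪st - Fst, g st⟫ := by
    rw [real_inner_comm, ← neg_sub, inner_neg_left]
  rw [add_sub_cancel]
  linarith

/-- Geometric decay of the suboptimality after a full Frank-Wolfe
step when the surrogate gap dominates the curvature term. -/
theorem frank_wolfe_full_step_decrease {d : ℕ}
    (S : Set (EuclideanSpace ℝ (Fin d))) (hSconv : Convex ℝ S) (hScomp : IsCompact S)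
    (f : EuclideanSpace ℝ (Fin d) → ℝ) (hf : ConvexOn ℝ S f)
    (g : EuclideanSpace ℝ (Fin d) → EuclideanSpace ℝ (Fin d))
    (hg : ∀ x ∈ S, HasGradientAt f (g x) x)
    (β : ℝ) (hβ : 0 < β)
    (hsmooth : ∀ x ∈ S, ∀ y ∈ S, ‖g x - g y‖ ≤ β * ‖x - y‖)
    (fstar : ℝ) (hfstar : IsLeast (f '' S) fstar)
    (δ : ℝ) (hδ0 : 0 < δ) (hδ1 : δ ≤ 1)
    (st Fst : EuclideanSpace ℝ (Fin d)) (hst : st ∈ S) (hFst : Fst ∈ S)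
    (hgap : ⟪st - Fst, g st⟫ ≥ δ * (f st - fstar))
    (hbig : ⟪st - Fst, g st⟫ ≥ β * ‖Fst - st‖ ^ 2) :
    f (st + (Fst - st)) - fstar ≤ (1 - δ / 2) * (f st - fstar) :=
  frank_wolfe_full_step_decrease_general S hSconv f g hg β hsmooth fstar δ st Fst hst hFst hgap hbig
end
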